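/- arXiv:1107.1494 — 5 statements merged into one kernel-verified Lean document; each statement's English description precedes it below -/
import Mathlib

section
/- Let (Y, d) be a metric space, X a metrizable space, A a closed subset of X, and P a locally closed subset of Y equipped with equiconnecting data: an open subset Ω of P × P containing the diagonal and a continuous map λ : Ω × [0,1] → P such that λ(x,y,0) = x, λ(x,y,1) = y for all (x,y) ∈ Ω and λ(z,z,t) = z for all z ∈ P, t ∈ [0,1]. Let f : X → Y be a continuous map with f(X \ A) ⊆ P. Then for every cover 𝒰 of P by sets open in P there exists a cover 𝒱 of P by sets open in P such that every continuous map g : X → Y satisfying g|_A = f|_A, g(X \ A) ⊆ P and g|_{X \ A} 𝒱-close to f|_{X \ A} is 𝒰-homotopic to f in Y relative to A. -/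
open Set Topology unitInterval

/-- The Hilbert cube `Q = [0,1]^ℕ`. -/
abbrev HilbertCube : Type := ℕ → unitInterval

/-- Two maps `f g : X → Y` are `𝒰`-close if every `x` admits `U ∈ 𝒰` containing
both `f x` and `g x`. -/
def UClose {X Y : Type} (𝒰 : Set (Set Y)) (f g : X → Y) : Prop :=
  ∀ x : X, ∃ U ∈ 𝒰, f x ∈ U ∧ g x ∈ U

/-- `𝒰` is a cover of `Y` by open sets. -/
def IsOpenCover {Y : Type} [TopologicalSpace Y] (𝒰 : Set (Set Y)) : Prop :=
  (∀ U ∈ 𝒰, IsOpen U) ∧ ⋃₀ 𝒰 = Set.univ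

/-- A closed set `Z ⊆ Y` is a `Z`-set: every map of the Hilbert cube into `Y` can be
approximated, with respect to any open cover, by maps omitting `Z`. -/
def IsZSet {Y : Type} [TopologicalSpace Y] (Z : Set Y) : Prop :=
  IsClosed Z ∧ ∀ u : HilbertCube → Y, Continuous u → ∀ 𝒰 : Set (Set Y), IsOpenCover 𝒰 →
    ∃ v : HilbertCube → Y, Continuous v ∧ Set.range v ⊆ Zᶜ ∧ UClose 𝒰 u v

/-- A `σ`-`Z`-set is a countable union of `Z`-sets. -/
def IsSigmaZSet {Y : Type} [TopologicalSpace Y] (B : Set Y) : Prop :=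
  ∃ Z : ℕ → Set Y, (∀ n, IsZSet (Z n)) ∧ B = ⋃ n, Z n

/-- A space is completely metrizable if some complete metric induces its topology. -/
def IsCompletelyMetrizable (X : Type) [t : TopologicalSpace X] : Prop :=
  ∃ m : MetricSpace X, m.toUniformSpace.toTopologicalSpace = t ∧
    @CompleteSpace X m.toUniformSpace

/-- `X` has a basis of open sets of cardinality at most `α`. -/
def HasWeightLE (X : Type) [TopologicalSpace X] (α : Cardinal) : Prop :=
  ∃ b : Set (Set X), TopologicalSpace.IsTopologicalBasis b ∧ Cardinal.mk b ≤ α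

/-- An `α`-manifold: a metrizable space admitting an open cover by sets homeomorphic to the
real Hilbert space `ℓ²(ι)` with an orthonormal basis indexed by a set `ι` of cardinality `α`. -/
def IsAlphaManifold (α : Cardinal) (M : Type) [TopologicalSpace M] : Prop :=
  TopologicalSpace.MetrizableSpace M ∧
  ∃ ι : Type, Cardinal.mk ι = α ∧
    ∃ 𝒞 : Set (Set M), (∀ U ∈ 𝒞, IsOpen U ∧ Nonempty (↥U ≃ₜ lp (fun _ : ι => ℝ) 2)) ∧
      ⋃₀ 𝒞 = Set.univ

/-- A Hilbert manifold: a metrizable space admitting an open cover by sets homeomorphic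
to some infinite-dimensional real Hilbert space. -/
def IsHilbertManifold (M : Type) [TopologicalSpace M] : Prop :=
  TopologicalSpace.MetrizableSpace M ∧
  ∃ 𝒞 : Set (Set M), (∀ U ∈ 𝒞, IsOpen U ∧
      ∃ ι : Type, Infinite ι ∧ Nonempty (↥U ≃ₜ lp (fun _ : ι => ℝ) 2)) ∧
    ⋃₀ 𝒞 = Set.univ

/-- `f : X → Y` is a `Z`-embedding into the subspace `M ⊆ Y`: it corestricts to a closed
embedding of `X` into `M` whose image is a `Z`-set in `M`. -/
def IsZEmbeddingInto {X Y : Type} [TopologicalSpace X] [TopologicalSpace Y]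
    (M : Set Y) (f : X → Y) : Prop :=
  ∃ g : X → ↥M, (∀ x, (g x : Y) = f x) ∧ Topology.IsClosedEmbedding g ∧
    IsZSet (Set.range g)

/-- A `𝒰`-homotopy: a continuous `F : X × I → Y` such that each track `F({x} × I)` is a
single point or lies in some member of `𝒰`. -/
def IsUHomotopy {X Y : Type} [TopologicalSpace X] [TopologicalSpace Y]
    (𝒰 : Set (Set Y)) (F : X × unitInterval → Y) : Prop :=
  Continuous F ∧ ∀ x : X, (∀ s t : unitInterval, F (x, s) = F (x, t)) ∨
    ∃ U ∈ 𝒰, ∀ t : unitInterval, F (x, t) ∈ U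

/-- `f` and `g` are `𝒰`-homotopic relative to `A`. -/
def UHomotopicRel {X Y : Type} [TopologicalSpace X] [TopologicalSpace Y]
    (𝒰 : Set (Set Y)) (A : Set X) (f g : X → Y) : Prop :=
  ∃ F : X × unitInterval → Y, IsUHomotopy 𝒰 F ∧
    (∀ x, F (x, 0) = f x) ∧ (∀ x, F (x, 1) = g x) ∧ ∀ a ∈ A, ∀ t, F (a, t) = f a

/-!
The homotopy moves `f x` to `g x` along the path `t ↦ λ(f x, g x, t)` for `x ∉ A` and is
constant on `A`. The cover `𝒱` consists of balls `B(p, δ)` such that `λ` maps `B(p, δ)² × I`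
into a ball `B(p, r)` that lies in a member of `𝒰` and whose triple `B(p, 3r)` misses the closed
set `cl P \ P`. At a point `a ∈ A` with `f a ∈ P`, continuity follows from continuity of `λ` at
the diagonal; when `f a ∈ cl P \ P`, the choice of `r` gives
`d(H(x, t), f a) ≤ 2 d(f x, f a)` for `x ∉ A`, which tends to `0` as `x → a`.
-/

open Filter Metric

section Extension

variable {Z : Type*} {Ω : Set (Z × Z)} (lam : Ω × I → Z)

open Classical in
noncomputable def extendFst (w : (Z × Z) × I) : Z :=
  if h : w.1 ∈ Ω then lam (⟨w.1, h⟩, w.2) else w.1.1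

variable {lam}

theorem extendFst_of_mem {w : Z × Z} (hw : w ∈ Ω) (t : I) :
    extendFst lam (w, t) = lam (⟨w, hw⟩, t) :=
  dif_pos hw

theorem extendFst_zero (hlam0 : ∀ w : Ω, lam (w, 0) = w.1.1) (w : Z × Z) :
    extendFst lam (w, 0) = w.1 := by
  unfold extendFst
  split_ifs with hw
  · exact hlam0 ⟨w, hw⟩
  · rfl

theorem extendFst_diag {hΩd : ∀ z : Z, (z, z) ∈ Ω}
    (hlamd : ∀ z t, lam (⟨(z, z), hΩd z⟩, t) = z) (z : Z) (t : I) :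
    extendFst lam ((z, z), t) = z :=
  (extendFst_of_mem (hΩd z) t).trans (hlamd z t)

variable [TopologicalSpace Z]

theorem continuousAt_extendFst (hΩ : IsOpen Ω) (hlam : Continuous lam) {w : (Z × Z) × I}
    (hw : w.1 ∈ Ω) : ContinuousAt (extendFst lam) w := by
  have hcont : ContinuousOn (extendFst lam) (Ω ×ˢ univ) := by
    rw [continuousOn_iff_continuous_domRestrict]
    have : (Ω ×ˢ univ).domRestrict (extendFst lam) =
        fun q : ↥(Ω ×ˢ (univ : Set I)) => lam (⟨q.1.1, q.2.1⟩, q.1.2) :=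
      funext fun q => extendFst_of_mem q.2.1 q.1.2
    rw [this]
    fun_prop
  exact hcont.continuousAt ((hΩ.prod isOpen_univ).mem_nhds ⟨hw, trivial⟩)

theorem eventually_forall_extendFst_mem (hΩ : IsOpen Ω) (hlam : Continuous lam)
    {hΩd : ∀ z : Z, (z, z) ∈ Ω} (hlamd : ∀ z t, lam (⟨(z, z), hΩd z⟩, t) = z) {p : Z}
    {W : Set Z} (hW : W ∈ 𝓝 p) : ∀ᶠ w in 𝓝 (p, p), ∀ t, extendFst lam (w, t) ∈ W := by
  have := isCompact_univ.eventually_forall_of_forall_eventually (x₀ := (p, p))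
    (P := fun w t => extendFst lam (w, t) ∈ W) fun t _ =>
      (continuousAt_extendFst hΩ hlam (hΩd p)).preimage_mem_nhds
        (by rwa [extendFst_diag hlamd])
  simpa using this

end Extension

section JoinHomotopy

variable {X Y : Type*} {P : Set Y} {Ω : Set (P × P)} (lam : Ω × I → P)

open Classical in
noncomputable def joinHomotopy (f g : X → Y) (q : X × I) : Y :=
  if h : f q.1 ∈ P ∧ g q.1 ∈ P then
    ((extendFst lam ((⟨f q.1, h.1⟩, ⟨g q.1, h.2⟩), q.2) : P) : Y) else f q.1

variable {lam} {f g : X → Y}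

theorem joinHomotopy_of_mem {x : X} (hfx : f x ∈ P) (hgx : g x ∈ P) (t : I) :
    joinHomotopy lam f g (x, t) = ↑(extendFst lam ((⟨f x, hfx⟩, ⟨g x, hgx⟩), t)) :=
  dif_pos ⟨hfx, hgx⟩

theorem joinHomotopy_zero (hlam0 : ∀ w : Ω, lam (w, 0) = w.1.1) (x : X) :
    joinHomotopy lam f g (x, 0) = f x := by
  unfold joinHomotopy
  split_ifs
  · rw [extendFst_zero hlam0]
  · rfl

theorem joinHomotopy_one (hlam1 : ∀ w : Ω, lam (w, 1) = w.1.2) {x : X} (hfx : f x ∈ P)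
    (hgx : g x ∈ P) (hx : (⟨f x, hfx⟩, ⟨g x, hgx⟩) ∈ Ω) : joinHomotopy lam f g (x, 1) = g x := by
  rw [joinHomotopy_of_mem hfx hgx, extendFst_of_mem hx, hlam1]

theorem joinHomotopy_of_eq {hΩd : ∀ z : P, (z, z) ∈ Ω}
    (hlamd : ∀ z t, lam (⟨(z, z), hΩd z⟩, t) = z) {x : X} (hx : g x = f x) (t : I) :
    joinHomotopy lam f g (x, t) = f x := by
  by_cases hfx : f x ∈ P
  · have hgx : g x ∈ P := hx ▸ hfx
    rw [joinHomotopy_of_mem hfx hgx]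
    convert congrArg Subtype.val (extendFst_diag hlamd ⟨f x, hfx⟩ t) using 5
    exact Subtype.ext hx
  · exact dif_neg fun h => hfx h.1

variable [TopologicalSpace X] [TopologicalSpace Y]

theorem continuousWithinAt_joinHomotopy (hΩ : IsOpen Ω) (hlam : Continuous lam)
    (hf : Continuous f) (hg : Continuous g) {x : X} (hfx : f x ∈ P) (hgx : g x ∈ P)
    (hx : (⟨f x, hfx⟩, ⟨g x, hgx⟩) ∈ Ω) (t : I) :
    ContinuousWithinAt (joinHomotopy lam f g) {q | f q.1 ∈ P ∧ g q.1 ∈ P} (x, t) := by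
  set T := {q : X × I | f q.1 ∈ P ∧ g q.1 ∈ P}
  let φ : T → (P × P) × I := fun q => ((⟨f q.1.1, q.2.1⟩, ⟨g q.1.1, q.2.2⟩), q.1.2)
  have hφ : Continuous φ := by fun_prop
  rw [continuousWithinAt_iff_continuousAt_domRestrict _ (show (x, t) ∈ T from ⟨hfx, hgx⟩)]
  have : T.domRestrict (joinHomotopy lam f g) = fun q => ((extendFst lam (φ q) : P) : Y) :=
    funext fun q => dif_pos q.2
  rw [this]
  exact continuous_subtype_val.continuousAt.comp
    ((continuousAt_extendFst hΩ hlam (w := φ ⟨(x, t), hfx, hgx⟩) hx).comp hφ.continuousAt)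

end JoinHomotopy

theorem dist_le_two_mul_dist_of_mem_ball {Y : Type*} [PseudoMetricSpace Y] {c u v y : Y}
    {r : ℝ} (hu : u ∈ ball c r) (hv : v ∈ ball c r) (hy : y ∉ ball c (3 * r)) :
    dist u y ≤ 2 * dist v y := by
  rw [mem_ball] at hu hv hy
  linarith [dist_triangle4 u c v y, dist_triangle y v c, dist_comm y c, dist_comm c v,
    dist_comm v y]

section Metric

variable {X Y : Type*} [TopologicalSpace X] [MetricSpace Y] {P : Set Y} {Ω : Set (P × P)}
  {lam : Ω × I → P} {A : Set X} {f g : X → Y}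

theorem continuousWithinAt_joinHomotopy_preimage_compl (hΩ : IsOpen Ω) (hΩd : ∀ z : P, (z, z) ∈ Ω)
    (hlam : Continuous lam) (hlamd : ∀ z t, lam (⟨(z, z), hΩd z⟩, t) = z)
    (hf : Continuous f) (hg : Continuous g) (hgA : EqOn g f A)
    (hfP : ∀ x ∉ A, f x ∈ P) (hgP : ∀ x ∉ A, g x ∈ P)
    (hest : ∀ x ∉ A, ∀ t, ∀ y ∈ closure P \ P,
      dist (joinHomotopy lam f g (x, t)) y ≤ 2 * dist (f x) y)
    {x : X} (hx : x ∈ A) (t : I) :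
    ContinuousWithinAt (joinHomotopy lam f g) (Prod.fst ⁻¹' Aᶜ) (x, t) := by
  have hoff : ∀ᶠ q in 𝓝[Prod.fst ⁻¹' Aᶜ] (x, t), q.1 ∉ A := self_mem_nhdsWithin
  by_cases hfx : f x ∈ P
  · have hgx : g x ∈ P := (hgA hx).symm ▸ hfx
    have hdiag : (⟨f x, hfx⟩, ⟨g x, hgx⟩) ∈ Ω := by
      convert hΩd ⟨f x, hfx⟩ using 2
      exact Subtype.ext (hgA hx)
    exact (continuousWithinAt_joinHomotopy hΩ hlam hf hg hfx hgx hdiag t).mono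
      fun q hq => ⟨hfP _ hq, hgP _ hq⟩
  rcases (𝓝[Prod.fst ⁻¹' Aᶜ] (x, t)).eq_or_neBot with hbot | hne
  · rw [ContinuousWithinAt, hbot]
    exact tendsto_bot
  have hfcont : Tendsto (fun q : X × I => f q.1) (𝓝[Prod.fst ⁻¹' Aᶜ] (x, t)) (𝓝 (f x)) :=
    (hf.comp continuous_fst).continuousWithinAt
  have hfx' : f x ∈ closure P \ P :=
    ⟨mem_closure_of_tendsto hfcont (hoff.mono fun q hq => hfP _ hq), hfx⟩
  rw [ContinuousWithinAt, joinHomotopy_of_eq hlamd (hgA hx), tendsto_iff_dist_tendsto_zero]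
  refine squeeze_zero' (Eventually.of_forall fun _ => dist_nonneg)
    (hoff.mono fun q hq => hest q.1 hq q.2 _ hfx') ?_
  simpa using (tendsto_iff_dist_tendsto_zero.1 hfcont).const_mul 2

theorem continuous_joinHomotopy (hA : IsClosed A) (hΩ : IsOpen Ω) (hΩd : ∀ z : P, (z, z) ∈ Ω)
    (hlam : Continuous lam) (hlamd : ∀ z t, lam (⟨(z, z), hΩd z⟩, t) = z)
    (hf : Continuous f) (hg : Continuous g) (hgA : EqOn g f A)
    (hfP : ∀ x ∉ A, f x ∈ P) (hgP : ∀ x ∉ A, g x ∈ P)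
    (hpair : ∀ x (hx : x ∉ A), (⟨f x, hfP x hx⟩, ⟨g x, hgP x hx⟩) ∈ Ω)
    (hest : ∀ x ∉ A, ∀ t, ∀ y ∈ closure P \ P,
      dist (joinHomotopy lam f g (x, t)) y ≤ 2 * dist (f x) y) :
    Continuous (joinHomotopy lam f g) := by
  refine continuous_iff_continuousAt.2 fun ⟨x, t⟩ => ?_
  by_cases hx : x ∈ A
  · rw [← continuousWithinAt_univ, ← union_compl_self (Prod.fst ⁻¹' A), ← preimage_compl]
    refine ContinuousWithinAt.union ?_
      (continuousWithinAt_joinHomotopy_preimage_compl hΩ hΩd hlam hlamd hf hg hgA hfP hgP hest hx t)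
    exact (hf.comp continuous_fst).continuousWithinAt.congr
      (fun q hq => joinHomotopy_of_eq hlamd (hgA hq) q.2) (joinHomotopy_of_eq hlamd (hgA hx) t)
  · have hnhds : {q : X × I | f q.1 ∈ P ∧ g q.1 ∈ P} ∈ 𝓝 (x, t) :=
      mem_of_superset ((hA.isOpen_compl.preimage continuous_fst).mem_nhds hx)
        fun q hq => ⟨hfP _ hq, hgP _ hq⟩
    exact (continuousWithinAt_joinHomotopy hΩ hlam hf hg _ _ (hpair x hx) t).continuousAt hnhds

end Metric

section Refinement

variable {Y : Type} [MetricSpace Y] {P : Set Y} {Ω : Set (P × P)} {lam : Ω × I → P}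
  {𝒰 𝒱 : Set (Set P)}

/- The distance bound is what makes the homotopy continuous at points of `A` that `f` sends
to `closure P \ P`. -/
variable (lam 𝒰 𝒱) in
def IsPathRefinement : Prop :=
  ∀ V ∈ 𝒱, ∃ U ∈ 𝒰, ∀ q₁ ∈ V, ∀ q₂ ∈ V, (q₁, q₂) ∈ Ω ∧ ∀ t : I,
    extendFst lam ((q₁, q₂), t) ∈ U ∧
      ∀ y ∈ closure P \ P, dist ((extendFst lam ((q₁, q₂), t) : P) : Y) y ≤ 2 * dist (q₁ : Y) y

theorem exists_pos_isPathRefinement_singleton_ball (hP : IsLocallyClosed P) (hΩ : IsOpen Ω)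
    (hΩd : ∀ z : P, (z, z) ∈ Ω) (hlam : Continuous lam) (hlam0 : ∀ w : Ω, lam (w, 0) = w.1.1)
    (hlamd : ∀ z t, lam (⟨(z, z), hΩd z⟩, t) = z) (h𝒰 : IsOpenCover 𝒰) (p : P) :
    ∃ δ > 0, IsPathRefinement lam 𝒰 {ball p δ} := by
  obtain ⟨U, hU, hpU⟩ : ∃ U ∈ 𝒰, p ∈ U := mem_sUnion.1 (h𝒰.2 ▸ mem_univ p)
  obtain ⟨ρ, hρ, hρU⟩ := isOpen_iff.1 (h𝒰.1 U hU) p hpU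
  obtain ⟨ρ', hρ', hρ'P⟩ := isOpen_iff.1 hP.isOpen_coborder p (subset_coborder p.2)
  set r := min ρ (ρ' / 3)
  have hr : 0 < r := lt_min hρ (by positivity)
  obtain ⟨δ, hδ, hball⟩ := eventually_nhds_iff_ball.1 (Filter.Eventually.and
    (hΩ.mem_nhds (hΩd p)) (eventually_forall_extendFst_mem hΩ hlam hlamd (ball_mem_nhds p hr)))
  refine ⟨δ, hδ, fun V hV => ⟨U, hU, fun q₁ h₁ q₂ h₂ => ?_⟩⟩
  rw [mem_singleton_iff] at hV
  subst hV
  obtain ⟨hq, htrack⟩ := hball (q₁, q₂) (by rw [← ball_prod_same]; exact ⟨h₁, h₂⟩)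
  refine ⟨hq, fun t => ⟨hρU (ball_subset_ball (min_le_left _ _) (htrack t)), fun y hy => ?_⟩⟩
  have hq₁ : q₁ ∈ ball p r := by simpa [extendFst_zero hlam0] using htrack 0
  refine dist_le_two_mul_dist_of_mem_ball (c := (p : Y)) (htrack t) hq₁ fun hyp => ?_
  exact hρ'P (ball_subset_ball (by linarith [min_le_right ρ (ρ' / 3)]) hyp) hy

theorem exists_isOpenCover_isPathRefinement (hP : IsLocallyClosed P) (hΩ : IsOpen Ω)
    (hΩd : ∀ z : P, (z, z) ∈ Ω) (hlam : Continuous lam) (hlam0 : ∀ w : Ω, lam (w, 0) = w.1.1)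
    (hlamd : ∀ z t, lam (⟨(z, z), hΩd z⟩, t) = z) (h𝒰 : IsOpenCover 𝒰) :
    ∃ 𝒱, IsOpenCover 𝒱 ∧ IsPathRefinement lam 𝒰 𝒱 := by
  choose δ hδ hrefine using
    exists_pos_isPathRefinement_singleton_ball hP hΩ hΩd hlam hlam0 hlamd h𝒰
  refine ⟨range fun p => ball p (δ p), ⟨?_, ?_⟩, ?_⟩
  · rintro _ ⟨p, rfl⟩
    exact isOpen_ball
  · exact eq_univ_of_forall fun p => mem_sUnion_of_mem (mem_ball_self (hδ p)) ⟨p, rfl⟩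
  · rintro _ ⟨p, rfl⟩
    exact hrefine p _ rfl

theorem IsPathRefinement.exists_forall_joinHomotopy_mem {X : Type*}
    (h : IsPathRefinement lam 𝒰 𝒱) {f g : X → Y} {x : X} (hfx : f x ∈ P) (hgx : g x ∈ P)
    (hclose : ∃ V ∈ 𝒱, f x ∈ Subtype.val '' V ∧ g x ∈ Subtype.val '' V) :
    ∃ U ∈ 𝒰, (⟨f x, hfx⟩, ⟨g x, hgx⟩) ∈ Ω ∧ ∀ t,
      joinHomotopy lam f g (x, t) ∈ Subtype.val '' U ∧
        ∀ y ∈ closure P \ P, dist (joinHomotopy lam f g (x, t)) y ≤ 2 * dist (f x) y := by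
  obtain ⟨V, hV, ⟨q₁, hq₁, hfq⟩, ⟨q₂, hq₂, hgq⟩⟩ := hclose
  obtain rfl : q₁ = ⟨f x, hfx⟩ := Subtype.ext hfq
  obtain rfl : q₂ = ⟨g x, hgx⟩ := Subtype.ext hgq
  obtain ⟨U, hU, hUV⟩ := h V hV
  obtain ⟨hpair, htrack⟩ := hUV _ hq₁ _ hq₂
  refine ⟨U, hU, hpair, fun t => ?_⟩
  rw [joinHomotopy_of_mem hfx hgx]
  exact ⟨mem_image_of_mem _ (htrack t).1, (htrack t).2⟩

end Refinement

theorem hom_ext_lemma_general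
    (Y : Type) [MetricSpace Y]
    (X : Type) [TopologicalSpace X]
    (A : Set X) (hA : IsClosed A)
    (P : Set Y) (hP : IsLocallyClosed P)
    (Ω : Set (↥P × ↥P)) (hΩo : IsOpen Ω) (hΩd : ∀ z : ↥P, (z, z) ∈ Ω)
    (lam : ↥Ω × unitInterval → ↥P) (hlamc : Continuous lam)
    (hlam0 : ∀ w : ↥Ω, lam (w, 0) = w.1.1)
    (hlam1 : ∀ w : ↥Ω, lam (w, 1) = w.1.2)
    (hlamd : ∀ (z : ↥P) (t : unitInterval), lam (⟨(z, z), hΩd z⟩, t) = z)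
    (f : X → Y) (hf : Continuous f) (hfP : ∀ x ∉ A, f x ∈ P)
    (𝒰 : Set (Set ↥P)) (h𝒰 : IsOpenCover 𝒰) :
    ∃ 𝒱 : Set (Set ↥P), IsOpenCover 𝒱 ∧
      ∀ g : X → Y, Continuous g → (∀ a ∈ A, g a = f a) → (∀ x ∉ A, g x ∈ P) →
        (∀ x ∉ A, ∃ V ∈ 𝒱, f x ∈ Subtype.val '' V ∧ g x ∈ Subtype.val '' V) →
        UHomotopicRel ((fun U : Set ↥P => (Subtype.val '' U : Set Y)) '' 𝒰) A f g := by
  obtain ⟨𝒱, h𝒱, hrefine⟩ :=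
    exists_isOpenCover_isPathRefinement hP hΩo hΩd hlamc hlam0 hlamd h𝒰
  refine ⟨𝒱, h𝒱, fun g hg hgA hgP hclose => ?_⟩
  choose U hU hpair htrack using fun x hx =>
    hrefine.exists_forall_joinHomotopy_mem (hfP x hx) (hgP x hx) (hclose x hx)
  have hconst : ∀ a ∈ A, ∀ t, joinHomotopy lam f g (a, t) = f a :=
    fun a ha => joinHomotopy_of_eq hlamd (hgA a ha)
  refine ⟨joinHomotopy lam f g, ⟨continuous_joinHomotopy hA hΩo hΩd hlamc hlamd hf hg hgA hfP
    hgP hpair fun x hx t => (htrack x hx t).2, fun x => ?_⟩, joinHomotopy_zero hlam0, fun x => ?_,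
    hconst⟩
  · by_cases hx : x ∈ A
    · exact Or.inl fun s t => by rw [hconst x hx, hconst x hx]
    · exact Or.inr ⟨_, mem_image_of_mem _ (hU x hx), fun t => (htrack x hx t).1⟩
  · by_cases hx : x ∈ A
    · rw [hconst x hx, hgA x hx]
    · exact joinHomotopy_one hlam1 _ _ (hpair x hx)

/-- **Lemma (hom-ext).** If `P ⊆ Y` is locally closed and equiconnected, then maps that
agree with `f` on `A`, send `X \ A` into `P` and are `𝒱`-close to `f` off `A` are
`𝒰`-homotopic to `f` in `Y` relative to `A`, for a suitable open cover `𝒱` of `P`. -/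
theorem hom_ext_lemma
    (Y : Type) [MetricSpace Y]
    (X : Type) [TopologicalSpace X] [TopologicalSpace.MetrizableSpace X]
    (A : Set X) (hA : IsClosed A)
    (P : Set Y) (hP : IsLocallyClosed P)
    (Ω : Set (↥P × ↥P)) (hΩo : IsOpen Ω) (hΩd : ∀ z : ↥P, (z, z) ∈ Ω)
    (lam : ↥Ω × unitInterval → ↥P) (hlamc : Continuous lam)
    (hlam0 : ∀ w : ↥Ω, lam (w, 0) = w.1.1)
    (hlam1 : ∀ w : ↥Ω, lam (w, 1) = w.1.2)
    (hlamd : ∀ (z : ↥P) (t : unitInterval), lam (⟨(z, z), hΩd z⟩, t) = z)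
    (f : X → Y) (hf : Continuous f) (hfP : ∀ x ∉ A, f x ∈ P)
    (𝒰 : Set (Set ↥P)) (h𝒰 : IsOpenCover 𝒰) :
    ∃ 𝒱 : Set (Set ↥P), IsOpenCover 𝒱 ∧
      ∀ g : X → Y, Continuous g → (∀ a ∈ A, g a = f a) → (∀ x ∉ A, g x ∈ P) →
        (∀ x ∉ A, ∃ V ∈ 𝒱, f x ∈ Subtype.val '' V ∧ g x ∈ Subtype.val '' V) →
        UHomotopicRel ((fun U : Set ↥P => (Subtype.val '' U : Set Y)) '' 𝒰) A f g :=
  hom_ext_lemma_general Y X A hA P hP Ω hΩo hΩd lam hlamc hlam0 hlam1 hlamd f hf hfP 𝒰 h𝒰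
end

section
/- Let X and Y be metrizable topological spaces, h : X → Y a continuous map, and U an open subset of X such that the restriction of h to U is a topological embedding. Then the closure of h(∂U) in Y is disjoint from h(U), where ∂U denotes the boundary of U in X. -/
open Set Topology unitInterval

/-- **Lemma (disjoint).** If `h` restricts to an embedding on an open set `U`, then the
closure of `h(∂U)` is disjoint from `h(U)`. -/
theorem closure_image_frontier_disjoint
    (X : Type) [TopologicalSpace X] [TopologicalSpace.MetrizableSpace X]
    (Y : Type) [TopologicalSpace Y] [TopologicalSpace.MetrizableSpace Y]
    (h : X → Y) (hc : Continuous h)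
    (U : Set X) (hU : IsOpen U)
    (he : Topology.IsEmbedding (fun x : ↥U => h x)) :
    Disjoint (closure (h '' frontier U)) (h '' U) := by
  letI := TopologicalSpace.metrizableSpaceMetric X
  letI := TopologicalSpace.metrizableSpaceMetric Y
  rw [Set.disjoint_left]
  rintro y hy ⟨x, hxU, rfl⟩
  rw [mem_closure_iff_seq_limit] at hy
  obtain ⟨c, hc_mem, hc_lim⟩ := hy
  choose b hb hbc using hc_mem
  obtain ⟨V, hVnhds, hVclosed, hVU⟩ := exists_mem_nhds_isClosed_subset (hU.mem_nhds hxU)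
  have key : ∀ n : ℕ, ∃ a ∈ U, a ∉ V ∧ dist (h a) (h (b n)) < 1/(n+1) := by
    intro n
    have hbf : b n ∈ closure U \ U := hU.frontier_eq ▸ hb n
    have hbnV : b n ∉ V := fun hv => hbf.2 (hVU hv)
    have hopen : IsOpen (Vᶜ ∩ h ⁻¹' Metric.ball (h (b n)) (1/(n+1))) :=
      (hVclosed.isOpen_compl).inter (Metric.isOpen_ball.preimage hc)
    have hmem : b n ∈ Vᶜ ∩ h ⁻¹' Metric.ball (h (b n)) (1/(n+1)) := by
      refine ⟨hbnV, ?_⟩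
      simp only [Set.mem_preimage, Metric.mem_ball, dist_self]
      positivity
    obtain ⟨a, ⟨haV, hadist⟩, haU⟩ := mem_closure_iff.mp hbf.1 _ hopen hmem
    exact ⟨a, haU, haV, hadist⟩
  choose a haU haV hadist using key
  have hdist0 : Filter.Tendsto (fun n => dist (h (b n)) (h (a n))) Filter.atTop (𝓝 0) := by
    apply squeeze_zero (fun n => dist_nonneg) (fun n => ?_)
      tendsto_one_div_add_atTop_nhds_zero_nat
    rw [dist_comm]
    exact le_of_lt (hadist n)
  have hhb : Filter.Tendsto (fun n => h (b n)) Filter.atTop (𝓝 (h x)) := by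
    simpa [hbc] using hc_lim
  have hha : Filter.Tendsto (fun n => h (a n)) Filter.atTop (𝓝 (h x)) :=
    hhb.congr_dist hdist0
  have hsub : Filter.Tendsto (fun n => (⟨a n, haU n⟩ : ↥U)) Filter.atTop (𝓝 ⟨x, hxU⟩) := by
    rw [he.tendsto_nhds_iff]
    exact hha
  have hax : Filter.Tendsto a Filter.atTop (𝓝 x) :=
    (continuous_subtype_val.tendsto _).comp hsub
  obtain ⟨n, hn⟩ := (hax.eventually_mem hVnhds).exists
  exact haV n hn
end

section
/- Let X and Y be metrizable spaces, K a compact metrizable space, and p : Y × K → Y the natural projection. Then composition with p is open in the limitation sense: for every continuous map f : X → Y × K and every open cover 𝒲 of Y × K there exists an open cover 𝒰 of Y such that every continuous map g : X → Y that is 𝒰-close to p ∘ f admits a continuous lift G : X → Y × K with p ∘ G = g and G 𝒲-close to f. -/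
open Set Topology unitInterval

/-- **Lemma (comp-proj).** Composition with the projection `p : Y × K → Y` (`K` compact)
is open in the limitation sense: maps close to `p ∘ f` lift to maps close to `f`. -/
theorem comp_proj_open
    (X : Type) [TopologicalSpace X] [TopologicalSpace.MetrizableSpace X]
    (Y : Type) [TopologicalSpace Y] [TopologicalSpace.MetrizableSpace Y]
    (K : Type) [TopologicalSpace K] [TopologicalSpace.MetrizableSpace K] [CompactSpace K]
    (f : X → Y × K) (hf : Continuous f)
    (𝒲 : Set (Set (Y × K))) (h𝒲 : IsOpenCover 𝒲) :
    ∃ 𝒰 : Set (Set Y), IsOpenCover 𝒰 ∧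
      ∀ g : X → Y, Continuous g → UClose 𝒰 (fun x => (f x).1) g →
        ∃ G : X → Y × K, Continuous G ∧ (∀ x, (G x).1 = g x) ∧ UClose 𝒲 f G := by
  classical
  set good : Set Y → Prop := fun U =>
    ∀ y1 ∈ U, ∀ y2 ∈ U, ∀ k : K, ∃ W ∈ 𝒲, (y1, k) ∈ W ∧ (y2, k) ∈ W with hgood
  refine ⟨{U | IsOpen U ∧ good U}, ⟨fun U hU => hU.1, ?_⟩, ?_⟩
  · -- covering property, via the tube lemma
    apply Set.eq_univ_of_forall
    intro y
    -- for each k, pick W ∈ 𝒲 containing (y,k) and a basic box inside it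
    have hWex : ∀ k : K, ∃ W ∈ 𝒲, (y, k) ∈ W := by
      intro k
      have : ((y, k) : Y × K) ∈ ⋃₀ 𝒲 := h𝒲.2 ▸ Set.mem_univ _
      simpa using this
    choose W hW𝒲 hWmem using hWex
    have hbox : ∀ k : K, ∃ (U : Set Y) (O : Set K),
        IsOpen U ∧ IsOpen O ∧ y ∈ U ∧ k ∈ O ∧ U ×ˢ O ⊆ W k := by
      intro k
      have hWopen := h𝒲.1 _ (hW𝒲 k)
      rcases isOpen_prod_iff.1 hWopen y k (hWmem k) with ⟨U, O, hU, hO, hyU, hkO, hsub⟩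
      exact ⟨U, O, hU, hO, hyU, hkO, hsub⟩
    choose U O hUopen hOopen hyU hkO hsub using hbox
    have hcover : (Set.univ : Set K) ⊆ ⋃ k, O k := fun k _ =>
      Set.mem_iUnion.2 ⟨k, hkO k⟩
    rcases isCompact_univ.elim_finite_subcover O hOopen hcover with ⟨s, hs⟩
    refine Set.mem_sUnion.2 ⟨⋂ k ∈ s, U k, ⟨?_, ?_⟩, ?_⟩
    · exact isOpen_biInter_finset fun k _ => hUopen k
    · intro y1 hy1 y2 hy2 k
      rcases Set.mem_iUnion₂.1 (hs (Set.mem_univ k)) with ⟨k0, hk0s, hkO0⟩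
      refine ⟨W k0, hW𝒲 k0, ?_, ?_⟩
      · exact hsub k0 ⟨Set.mem_iInter₂.1 hy1 k0 hk0s, hkO0⟩
      · exact hsub k0 ⟨Set.mem_iInter₂.1 hy2 k0 hk0s, hkO0⟩
    · exact Set.mem_iInter₂.2 fun k _ => hyU k
  · -- the lifting property
    intro g hg hclose
    refine ⟨fun x => (g x, (f x).2), hg.prodMk (continuous_snd.comp hf), fun x => rfl, ?_⟩
    intro x
    rcases hclose x with ⟨U, ⟨-, hUgood⟩, hfU, hgU⟩
    rcases hUgood _ hfU _ hgU (f x).2 with ⟨W, hW𝒲, h1, h2⟩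
    exact ⟨W, hW𝒲, by simpa using h1, h2⟩
end

section
/- Let M be a nonempty metrizable topological space and let F : M × [0,1] → M be a continuous map satisfying F(x,0) = F(x,1) = x for all x ∈ M. Then the restriction of F to M × (0,1) is not a topological embedding. -/
open Set Topology unitInterval

/-! Pick `p = (x, t)` with `0 < t < 1`. As `s → 0⁺` the points `(F p, s)` are sent by `F` to points
converging to `F (F p, 0) = F p`; were `F` an embedding on `M × (0,1)`, these points would converge
to `p`, so `s → t ≠ 0`. -/

theorem snd_eq_of_isInducing_restrict {X T : Type*} [TopologicalSpace X] [TopologicalSpace T]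
    [T2Space T] {F : X × T → X} (hF : Continuous F) {t₀ : T} (hF₀ : ∀ x, F (x, t₀) = x)
    {S : Set (X × T)} (hS : IsInducing fun q : S => F q) {p : X × T} (hp : p ∈ S)
    (hcl : (F p, t₀) ∈ closure S) : p.2 = t₀ := by
  set l : Filter S := Filter.comap Subtype.val (𝓝 (F p, t₀))
  have : l.NeBot := mem_closure_iff_comap_neBot.mp hcl
  have hval : Filter.Tendsto Subtype.val l (𝓝 (F p, t₀)) := Filter.tendsto_comap
  have himage := (hF.tendsto (F p, t₀)).comp hval
  rw [hF₀] at himage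
  have hp_lim : Filter.Tendsto (fun q : S => (q : X × T).2) l (𝓝 p.2) :=
    (continuous_snd.comp continuous_subtype_val).tendsto ⟨p, hp⟩ |>.comp
      (hS.tendsto_nhds_iff.mpr himage)
  exact tendsto_nhds_unique hp_lim (continuous_snd.tendsto _ |>.comp hval)

theorem dense_setOf_snd_pos_lt_one (X : Type*) [TopologicalSpace X] :
    Dense {p : X × I | 0 < (p.2 : ℝ) ∧ (p.2 : ℝ) < 1} := by
  have hprod : {p : X × I | 0 < (p.2 : ℝ) ∧ (p.2 : ℝ) < 1} = univ ×ˢ Ioo 0 1 := by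
    ext; simp
  rw [dense_iff_closure_eq, hprod, closure_prod_eq, closure_univ, closure_Ioo zero_ne_one,
    ← univ_eq_Icc, univ_prod_univ]

theorem no_embedding_of_identity_endpoints_general
    (M : Type) [TopologicalSpace M] [Nonempty M]
    (F : M × unitInterval → M) (hF : Continuous F)
    (h0 : ∀ x, F (x, 0) = x) :
    ¬ Topology.IsEmbedding
      (fun q : ↥{p : M × unitInterval | 0 < (p.2 : ℝ) ∧ (p.2 : ℝ) < 1} => F q.1) := by
  intro he
  obtain ⟨x⟩ := ‹Nonempty M›
  obtain ⟨t, ht₀, ht₁⟩ := exists_between (zero_lt_one' I)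
  have ht : (x, t) ∈ {p : M × I | 0 < (p.2 : ℝ) ∧ (p.2 : ℝ) < 1} := ⟨ht₀, ht₁⟩
  exact ht₀.ne' <|
    snd_eq_of_isInducing_restrict hF h0 he.isInducing ht (dense_setOf_snd_pos_lt_one M _)

/-- **Example (false).** For a homotopy `F` with `F(·,0) = F(·,1) = id` on a nonempty
metrizable space, the restriction of `F` to `M × (0,1)` is never an embedding. -/
theorem no_embedding_of_identity_endpoints
    (M : Type) [TopologicalSpace M] [TopologicalSpace.MetrizableSpace M] [Nonempty M]
    (F : M × unitInterval → M) (hF : Continuous F)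
    (h0 : ∀ x, F (x, 0) = x) (h1 : ∀ x, F (x, 1) = x) :
    ¬ Topology.IsEmbedding
      (fun q : ↥{p : M × unitInterval | 0 < (p.2 : ℝ) ∧ (p.2 : ℝ) < 1} => F q.1) :=
  no_embedding_of_identity_endpoints_general M F hF h0
end

section
/- Let X be a completely metrizable space and B a σ-Z-set in X. Then for every continuous map f : Q → X from the Hilbert cube Q and every open cover 𝒰 of X there is a continuous map g : Q → X that is 𝒰-close to f and whose image has closure disjoint from B. -/
open Set Topology unitInterval

/-- Metric form of the avoidance theorem: in a complete metric space, a map of the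
Hilbert cube can be uniformly approximated by a map whose range has closure disjoint
from every `Z`-set in a given countable family. -/
theorem sigma_Z_avoidance_metric (X : Type) [MetricSpace X] [CompleteSpace X]
    (Z : ℕ → Set X) (hZ : ∀ n, IsZSet (Z n))
    (f : HilbertCube → X) (hf : Continuous f)
    (ε : ℝ) (hε : 0 < ε) :
    ∃ g : HilbertCube → X, Continuous g ∧ (∀ x, dist (f x) (g x) ≤ ε) ∧
      ∀ n, Disjoint (closure (Set.range g)) (Z n) := by
  classical
  -- one approximation step: push off `Z n`, moving by at most `b/2`, and record a
  -- safety margin `b'` with `thickening (2*b') (range v) ⊆ (Z n)ᶜ`.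
  have step : ∀ (n : ℕ) (u : HilbertCube → X), Continuous u → ∀ b : ℝ, 0 < b →
      ∃ v : HilbertCube → X, ∃ b' : ℝ, Continuous v ∧ 0 < b' ∧
        (∀ x, dist (u x) (v x) ≤ b / 2) ∧ b' ≤ b / 2 ∧
        Metric.thickening (2 * b') (Set.range v) ⊆ (Z n)ᶜ := by
    intro n u hu b hb
    have hcov : IsOpenCover {S : Set X | ∃ y, S = Metric.ball y (b/4)} := by
      constructor
      · rintro U ⟨y, rfl⟩; exact Metric.isOpen_ball
      · ext x
        simp only [Set.mem_sUnion, Set.mem_univ, iff_true]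
        exact ⟨Metric.ball x (b/4), ⟨x, rfl⟩, Metric.mem_ball_self (by linarith)⟩
    obtain ⟨v, hv, hvr, hvc⟩ := (hZ n).2 u hu _ hcov
    obtain ⟨δ, hδ, hthick⟩ := (isCompact_range hv).exists_thickening_subset_open
      (hZ n).1.isOpen_compl hvr
    refine ⟨v, min (b/2) (δ/4), hv, by positivity, ?_, min_le_left _ _, ?_⟩
    · intro x
      obtain ⟨U, ⟨y, rfl⟩, hxU, hvU⟩ := hvc x
      have h1 : dist (u x) y < b/4 := Metric.mem_ball.1 hxU
      have h2 : dist (v x) y < b/4 := Metric.mem_ball.1 hvU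
      calc dist (u x) (v x) ≤ dist (u x) y + dist y (v x) := dist_triangle _ _ _
        _ ≤ b/4 + b/4 := by rw [dist_comm y (v x)]; linarith
        _ = b/2 := by ring
    · refine (Metric.thickening_mono ?_ _).trans hthick
      have h3 : min (b/2) (δ/4) ≤ δ/4 := min_le_right _ _
      linarith
  choose V Bp hVc hBp hVd hBle hVth using step
  -- construct the sequence of approximations
  let seq : ℕ → {p : (HilbertCube → X) × ℝ // Continuous p.1 ∧ 0 < p.2} :=
    fun n => Nat.rec ⟨(f, ε), hf, hε⟩
      (fun n p => ⟨(V n p.1.1 p.2.1 p.1.2 p.2.2, Bp n p.1.1 p.2.1 p.1.2 p.2.2),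
        hVc n p.1.1 p.2.1 p.1.2 p.2.2, hBp n p.1.1 p.2.1 p.1.2 p.2.2⟩) n
  let u : ℕ → HilbertCube → X := fun n => (seq n).1.1
  let b : ℕ → ℝ := fun n => (seq n).1.2
  have hucont : ∀ n, Continuous (u n) := fun n => (seq n).2.1
  have hbpos : ∀ n, 0 < b n := fun n => (seq n).2.2
  have hd : ∀ n x, dist (u n x) (u (n+1) x) ≤ b n / 2 :=
    fun n => hVd n (u n) (hucont n) (b n) (hbpos n)
  have hble : ∀ n, b (n+1) ≤ b n / 2 :=
    fun n => hBle n (u n) (hucont n) (b n) (hbpos n)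
  have hth : ∀ n, Metric.thickening (2 * b (n+1)) (Set.range (u (n+1))) ⊆ (Z n)ᶜ :=
    fun n => hVth n (u n) (hucont n) (b n) (hbpos n)
  have hb0 : b 0 = ε := rfl
  have hgeo : ∀ n, b n ≤ ε * (1/2)^n := by
    intro n
    induction n with
    | zero => rw [hb0]; norm_num
    | succ n ih =>
      calc b (n+1) ≤ b n / 2 := hble n
        _ ≤ ε * (1/2)^n / 2 := by linarith
        _ = ε * (1/2)^(n+1) := by ring
  have hchain : ∀ n x m, n ≤ m → dist (u n x) (u m x) ≤ b n - b m := by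
    intro n x m hnm
    induction m, hnm using Nat.le_induction with
    | base => simp
    | succ m hm ih =>
      calc dist (u n x) (u (m+1) x)
          ≤ dist (u n x) (u m x) + dist (u m x) (u (m+1) x) := dist_triangle _ _ _
        _ ≤ (b n - b m) + b m / 2 := add_le_add ih (hd m x)
        _ ≤ b n - b (m+1) := by linarith [hble m]
  -- the sequence is Cauchy in `C(Q, X)`
  let G : ℕ → C(HilbertCube, X) := fun n => ⟨u n, hucont n⟩
  have hcauchy : CauchySeq G := by
    apply cauchySeq_of_le_geometric (1/2 : ℝ) ε (by norm_num)
    intro n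
    rw [ContinuousMap.dist_le (by positivity)]
    intro x
    calc dist (u n x) (u (n+1) x) ≤ b n / 2 := hd n x
      _ ≤ ε * (1/2)^n := by linarith [hgeo n, hbpos n]
  obtain ⟨L, hL⟩ := cauchySeq_tendsto_of_complete hcauchy
  have hptw : ∀ x, Filter.Tendsto (fun m => u m x) Filter.atTop (nhds (L x)) := by
    intro x
    exact ((continuous_eval_const x).tendsto L).comp hL
  have hlim : ∀ n x, dist (u n x) (L x) ≤ b n := by
    intro n x
    refine le_of_tendsto (tendsto_const_nhds.dist (hptw x)) ?_
    filter_upwards [Filter.eventually_ge_atTop n] with m hm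
    have h1 := hchain n x m hm
    have h2 := hbpos m
    linarith
  have havoid : ∀ n, Disjoint (closure (Set.range (⇑L))) (Z n) := by
    intro n
    have hsub : closure (Set.range (⇑L)) ⊆ (Z n)ᶜ := by
      have h1 : Set.range (⇑L) ⊆ Metric.cthickening (b (n+1)) (Set.range (u (n+1))) := by
        rintro _ ⟨x, rfl⟩
        exact Metric.mem_cthickening_of_dist_le (L x) (u (n+1) x) _ _ ⟨x, rfl⟩
          (by rw [dist_comm]; exact hlim (n+1) x)
      refine (closure_minimal h1 Metric.isClosed_cthickening).trans ?_
      refine (Metric.cthickening_subset_thickening' (by linarith [hbpos (n+1)]) ?_ _).trans (hth n)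
      linarith [hbpos (n+1)]
    exact Set.disjoint_left.2 fun a ha hb => (hsub ha) hb
  exact ⟨⇑L, L.continuous, fun x => hlim 0 x, havoid⟩

/-- In a completely metrizable space, maps of the Hilbert cube can be pushed off a
`σ`-`Z`-set `B`: approximations whose image has closure disjoint from `B` exist. -/
theorem sigma_Z_avoidance
    (X : Type) [TopologicalSpace X] (hX : IsCompletelyMetrizable X)
    (B : Set X) (hB : IsSigmaZSet B)
    (f : HilbertCube → X) (hf : Continuous f)
    (𝒰 : Set (Set X)) (h𝒰 : IsOpenCover 𝒰) :
    ∃ g : HilbertCube → X, Continuous g ∧ UClose 𝒰 f g ∧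
      Disjoint (closure (Set.range g)) B := by
  obtain ⟨m, hm, hcomp⟩ := hX
  subst hm
  letI : MetricSpace X := m
  haveI : CompleteSpace X := hcomp
  obtain ⟨Z, hZ, rfl⟩ := hB
  have hK : IsCompact (Set.range f) := isCompact_range hf
  obtain ⟨ε, hε, hleb⟩ := lebesgue_number_lemma_of_metric_sUnion hK h𝒰.1
    (by rw [h𝒰.2]; exact Set.subset_univ _)
  obtain ⟨g, hg, hgd, hgZ⟩ := sigma_Z_avoidance_metric X Z hZ f hf (ε/2) (by linarith)
  refine ⟨g, hg, ?_, ?_⟩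
  · intro x
    obtain ⟨U, hU, hball⟩ := hleb (f x) ⟨x, rfl⟩
    refine ⟨U, hU, hball (Metric.mem_ball_self hε), hball ?_⟩
    rw [Metric.mem_ball, dist_comm]
    linarith [hgd x]
  · rw [Set.disjoint_iUnion_right]
    exact hgZ
end
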